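/- arXiv:2001.08493 — 2 statements merged into one kernel-verified Lean document; each statement's English description precedes it below -/
import Mathlib

section
/- If C is a maximal finite clique in the contact graph of a CAT(0) cube complex X, then there exists a vertex v of X with C = W_v, the set of hyperplanes adjacent to v. -/
/-!
The carrier of a hyperplane is geodesically convex in the median graph: halfspaces are convex
(by induction on the distance, the decisive case of distance two following from the uniqueness
of medians),
and a vertex between two carrier vertices is sent across the hyperplane by a median.
Convex sets of a median graph satisfy the Helly property with Helly number two, since three
pairwise intersecting convex sets all contain the median of three pairwise intersection points.
So the carriers of the finite clique `C` share a vertex `v`, whence `C ⊆ W_v`; as `W_v` is a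
clique, maximality gives `C = W_v`.
-/

open SimpleGraph

variable {V : Type*}

/-- A median graph: combinatorial model of (the 1-skeleton of) a CAT(0) cube complex. -/
def IsMedianGraph (G : SimpleGraph V) : Prop :=
  G.Connected ∧ ∀ x y z : V, ∃! m : V,
    G.dist x m + G.dist m y = G.dist x y ∧
    G.dist x m + G.dist m z = G.dist x z ∧
    G.dist y m + G.dist m z = G.dist y z

/-- Djoković–Winkler relation on oriented edges of a median graph; hyperplanes are its classes. -/
def Theta (G : SimpleGraph V) (e f : V × V) : Prop :=
  G.dist e.1 f.1 + G.dist e.2 f.2 ≠ G.dist e.1 f.2 + G.dist e.2 f.1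

/-- A hyperplane, identified with the set of (oriented) edges crossing it. -/
def IsHyperplane (G : SimpleGraph V) (h : Set (V × V)) : Prop :=
  ∃ e : V × V, G.Adj e.1 e.2 ∧ h = {f | G.Adj f.1 f.2 ∧ Theta G e f}

/-- The hyperplane `h` is adjacent to the vertex `v` (i.e. `v` lies in the carrier of `h`). -/
def AdjTo (G : SimpleGraph V) (h : Set (V × V)) (v : V) : Prop :=
  ∃ e ∈ h, e.1 = v ∨ e.2 = v

/-- `Wv G v`: the set of hyperplanes adjacent to `v`. -/
def Wv (G : SimpleGraph V) (v : V) : Set (Set (V × V)) :=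
  {h | IsHyperplane G h ∧ AdjTo G h v}

/-- Two hyperplanes are in contact if their carriers share a vertex. -/
def Contact (G : SimpleGraph V) (h h' : Set (V × V)) : Prop :=
  ∃ v : V, AdjTo G h v ∧ AdjTo G h' v

/-- Two hyperplanes are transverse if they cross a common square. -/
def Transverse (G : SimpleGraph V) (h h' : Set (V × V)) : Prop :=
  ∃ a b c d : V, (a, b) ∈ h ∧ (c, d) ∈ h ∧ (a, c) ∈ h' ∧ (b, d) ∈ h' ∧
    G.Adj a b ∧ G.Adj c d ∧ G.Adj a c ∧ G.Adj b d

/-- A clique in the contact graph: a set of hyperplanes whose carriers pairwise intersect. -/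
def IsContactClique (G : SimpleGraph V) (C : Set (Set (V × V))) : Prop :=
  (∀ h ∈ C, IsHyperplane G h) ∧ ∀ h ∈ C, ∀ h' ∈ C, h ≠ h' → Contact G h h'

/-- A maximal clique in the contact graph. -/
def IsMaxContactClique (G : SimpleGraph V) (C : Set (Set (V × V))) : Prop :=
  IsContactClique G C ∧ ∀ C', IsContactClique G C' → C ⊆ C' → C' = C

/-- The link of `v` is a cone, i.e. `v` is an extremal vertex. -/
def LinkIsCone (G : SimpleGraph V) (v : V) : Prop :=
  ∃ h ∈ Wv G v, ∀ h' ∈ Wv G v, h' ≠ h → Transverse G h h'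

/-- Uniform local finiteness. -/
def UnifLocFinite (G : SimpleGraph V) : Prop :=
  ∃ N : ℕ, ∀ v : V, (G.neighborSet v).Finite ∧ (G.neighborSet v).ncard ≤ N

abbrev Hyp (G : SimpleGraph V) := {h : Set (V × V) // IsHyperplane G h}

/-- The contact graph `𝒞(X)`. -/
def contactGraph (G : SimpleGraph V) : SimpleGraph (Hyp G) where
  Adj h h' := h ≠ h' ∧ Contact G h.1 h'.1
  symm := ⟨by
    rintro h h' ⟨hne, v, hv, hv'⟩
    exact ⟨hne.symm, v, hv', hv⟩⟩
  loopless := ⟨by rintro h ⟨hne, -⟩; exact hne rfl⟩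

/-- `Ical G w` = I(w): the hyperplanes whose carrier contains the carrier of `w`,
i.e. the intersection of the sets `Wv G v` over all vertices `v` adjacent to `w`. -/
def Ical (G : SimpleGraph V) (w : Set (V × V)) : Set (Set (V × V)) :=
  {u | IsHyperplane G u ∧ ∀ v : V, AdjTo G w v → AdjTo G u v}

/-- `Ical0 G w` = I⁰(w): the hyperplanes with the same carrier as `w`. -/
def Ical0 (G : SimpleGraph V) (w : Set (V × V)) : Set (Set (V × V)) :=
  {u | u ∈ Ical G w ∧ w ∈ Ical G u}

/-- The action of a cubical automorphism on sets of edges (e.g. hyperplanes). -/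
def hmap (G : SimpleGraph V) (φ : G ≃g G) (h : Set (V × V)) : Set (V × V) :=
  (fun e : V × V => (φ e.1, φ e.2)) '' h

/-- `π` is the vertex permutation induced by the contact-graph automorphism `ψ` via the
correspondence between vertices and maximal cliques (`ρ(ψ) = π`). -/
def InducesPerm (G : SimpleGraph V) (ψ : contactGraph G ≃g contactGraph G)
    (π : Equiv.Perm V) : Prop :=
  ∀ (v : V) (h : Hyp G), h.1 ∈ Wv G v ↔ (ψ h).1 ∈ Wv G (π v)

/-- The hyperplane `u` is adjacent, inside the cube complex structure of a hyperplane `w`,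
to the vertex of `w` given by the edge `e ∈ w`: `u` crosses a square containing `e`. -/
def HypAdjEdge (G : SimpleGraph V) (u : Set (V × V)) (e : V × V) : Prop :=
  ∃ c d : V, (e.1, c) ∈ u ∧ (e.2, d) ∈ u ∧ G.Adj c d

/-- The link, in the cube complex structure of hyperplane `w`, of the vertex given by
`e ∈ w` is a cone (i.e. this vertex of `w` is extremal). -/
def HypLinkCone (G : SimpleGraph V) (w : Set (V × V)) (e : V × V) : Prop :=
  ∃ u, IsHyperplane G u ∧ u ≠ w ∧ HypAdjEdge G u e ∧
    ∀ u', IsHyperplane G u' → u' ≠ w → HypAdjEdge G u' e → u' ≠ u → Transverse G u u'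

/-- No hyperplane of `X` has an extremal vertex. -/
def NoHypExtremalVertex (G : SimpleGraph V) : Prop :=
  ∀ w, IsHyperplane G w → ∀ e ∈ w, ¬ HypLinkCone G w e


namespace SimpleGraph

def interval (G : SimpleGraph V) (x y : V) : Set V :=
  {z | G.dist x z + G.dist z y = G.dist x y}

def IsGeodConvex (G : SimpleGraph V) (A : Set V) : Prop :=
  ∀ x ∈ A, ∀ y ∈ A, G.interval x y ⊆ A

/-- The halfspace `W(a, b)`: for an edge `ab`, the vertices closer to `a` than to `b`. -/
def halfspace (G : SimpleGraph V) (a b : V) : Set V :=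
  {x | G.dist x b = G.dist x a + 1}

def carrier (G : SimpleGraph V) (a b : V) : Set V :=
  {x | ∃ w, G.Adj x w ∧ (x ∈ G.halfspace a b ∧ w ∈ G.halfspace b a ∨
    x ∈ G.halfspace b a ∧ w ∈ G.halfspace a b)}

variable {G : SimpleGraph V} {a b p r u v w x y z : V}

theorem mem_interval : z ∈ G.interval x y ↔ G.dist x z + G.dist z y = G.dist x y := Iff.rfl

theorem interval_comm (x y : V) : G.interval x y = G.interval y x := by
  ext z
  simp only [mem_interval, dist_comm (u := z), dist_comm (u := x) (v := y)]
  omega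

theorem Connected.mem_interval_of_mem_interval (hG : G.Connected) (hw : w ∈ G.interval u y)
    (hy : y ∈ G.interval u v) : w ∈ G.interval u v ∧ y ∈ G.interval w v := by
  have h₁ : G.dist w v ≤ G.dist w y + G.dist y v := hG.dist_triangle
  have h₂ : G.dist u v ≤ G.dist u w + G.dist w v := hG.dist_triangle
  simp only [mem_interval] at *
  omega

theorem mem_halfspace : x ∈ G.halfspace a b ↔ G.dist x b = G.dist x a + 1 := Iff.rfl

theorem not_mem_halfspace_swap (hx : x ∈ G.halfspace a b) : x ∉ G.halfspace b a := by
  rw [mem_halfspace] at *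
  omega

theorem Connected.interval_subset_halfspace (hG : G.Connected) (hab : G.Adj a b)
    (hx : x ∈ G.halfspace a b) : G.interval x a ⊆ G.halfspace a b := by
  intro z hz
  have h₁ : G.dist x b ≤ G.dist x z + G.dist z b := hG.dist_triangle
  have h₂ : G.dist z b ≤ G.dist z a + G.dist a b := hG.dist_triangle
  rw [mem_interval] at hz
  rw [mem_halfspace] at *
  rw [dist_eq_one_iff_adj.2 hab] at h₂
  omega

theorem Connected.eq_of_mem_interval_of_convex_below (hG : G.Connected)
    (hbelow : ∀ w ∈ G.halfspace a b, G.dist w v < G.dist u v →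
      G.interval w v ⊆ G.halfspace a b)
    (hy : y ∈ G.interval u v) (hyH : y ∉ G.halfspace a b)
    (hw : w ∈ G.interval u y) (hwH : w ∈ G.halfspace a b) : w = u := by
  by_contra hne
  obtain ⟨hwuv, hywv⟩ := hG.mem_interval_of_mem_interval hw hy
  have huw : G.dist u w ≠ 0 := fun h => hne (hG.dist_eq_zero_iff.1 h).symm
  rw [mem_interval] at hwuv
  exact hyH (hbelow w hwH (by omega) hywv)

theorem carrier_comm (a b : V) : G.carrier b a = G.carrier a b := by
  ext x
  simp only [carrier, Set.mem_ofPred_eq, or_comm]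

theorem IsGeodConvex.inter {A B : Set V} (hA : G.IsGeodConvex A) (hB : G.IsGeodConvex B) :
    G.IsGeodConvex (A ∩ B) :=
  fun x hx y hy _ hz => ⟨hA x hx.1 y hy.1 hz, hB x hx.2 y hy.2 hz⟩

theorem isGeodConvex_univ : G.IsGeodConvex Set.univ :=
  fun _ _ _ _ _ _ => trivial

end SimpleGraph

namespace IsMedianGraph

open SimpleGraph

variable {G : SimpleGraph V} {a b p r u v w x y z : V}

theorem exists_median (hG : IsMedianGraph G) (x y z : V) :
    ∃ m, m ∈ G.interval x y ∧ m ∈ G.interval x z ∧ m ∈ G.interval y z :=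
  (hG.2 x y z).exists

theorem dist_eq_add_one_or (hG : IsMedianGraph G) (hxy : G.Adj x y) (z : V) :
    G.dist y z = G.dist x z + 1 ∨ G.dist x z = G.dist y z + 1 := by
  obtain ⟨m, hxy', hxz, hyz⟩ := hG.exists_median x y z
  rw [mem_interval, dist_eq_one_iff_adj.2 hxy] at hxy'
  have hm : m = x ∨ m = y := by
    rcases Nat.eq_zero_or_pos (G.dist x m) with h | h
    · exact Or.inl (hG.1.dist_eq_zero_iff.1 h).symm
    · exact Or.inr (hG.1.dist_eq_zero_iff.1 (by omega : G.dist m y = 0))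
  rw [mem_interval] at hxz hyz
  rcases hm with rfl | rfl
  · rw [dist_eq_one_iff_adj.2 hxy.symm] at hyz
    exact Or.inl (by omega)
  · rw [dist_eq_one_iff_adj.2 hxy] at hxz
    exact Or.inr (by omega)

theorem mem_halfspace_or (hG : IsMedianGraph G) (hab : G.Adj a b) (x : V) :
    x ∈ G.halfspace a b ∨ x ∈ G.halfspace b a := by
  rw [mem_halfspace, mem_halfspace, dist_comm (u := x), dist_comm (u := x)]
  exact hG.dist_eq_add_one_or hab x

theorem eq_of_adj_of_adj_of_mem_halfspace (hG : IsMedianGraph G) (hab : G.Adj a b)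
    (hx : x ∈ G.halfspace b a) (hu : u ∈ G.halfspace a b) (hv : v ∈ G.halfspace a b)
    (hxu : G.Adj x u) (hxv : G.Adj x v) : u = v := by
  by_contra huv
  have hcross : ∀ {y}, y ∈ G.halfspace a b → G.Adj x y → G.dist x a = G.dist y a + 1 := by
    intro y hy hxy
    rcases hG.dist_eq_add_one_or hxy a with h | h <;>
      rcases hG.dist_eq_add_one_or hxy b with h' | h' <;>
      simp only [mem_halfspace] at hx hy <;> omega
  have hxu' := hcross hu hxu
  have hxv' := hcross hv hxv
  have hdux := dist_eq_one_iff_adj.2 hxu.symm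
  have hdxv := dist_eq_one_iff_adj.2 hxv
  have hdvx := dist_eq_one_iff_adj.2 hxv.symm
  have huv₂ : G.dist u v = 2 := by
    have htri : G.dist u v ≤ G.dist u x + G.dist x v := hG.1.dist_triangle
    have h₀ : G.dist u v ≠ 0 := fun h => huv (hG.1.dist_eq_zero_iff.1 h)
    have h₁ : G.dist u v ≠ 1 := fun h => by
      rcases hG.dist_eq_add_one_or (dist_eq_one_iff_adj.1 h) a with h | h <;> omega
    omega
  obtain ⟨m, hmuv, hmua, hmva⟩ := hG.exists_median u v a
  have hm : m ∈ G.halfspace a b := hG.1.interval_subset_halfspace hab hu hmua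
  have hvm : G.dist v m = G.dist m v := dist_comm
  simp only [mem_interval, mem_halfspace] at *
  -- both `m` and `x` are medians of `u`, `v`, `b`
  have hmx : m = x := (hG.2 u v b).unique (y₁ := m) (y₂ := x) ⟨by omega, by omega, by omega⟩
    ⟨by omega, by omega, by omega⟩
  subst hmx
  omega

theorem exists_adj_of_convex_below (hG : IsMedianGraph G) (hab : G.Adj a b)
    (hu : u ∈ G.halfspace a b)
    (hbelow : ∀ w ∈ G.halfspace a b, G.dist w v < G.dist u v →
      G.interval w v ⊆ G.halfspace a b)
    (hy : y ∈ G.interval u v) (hyH : y ∈ G.halfspace b a) :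
    G.dist y a = G.dist y u + G.dist u a ∧
      ∃ u', G.Adj u u' ∧ u' ∈ G.interval u y ∧ u' ∈ G.halfspace b a := by
  have hpeel := fun {w} => hG.1.eq_of_mem_interval_of_convex_below (w := w) hbelow hy
    (not_mem_halfspace_swap hyH)
  obtain ⟨m, hmuy, hmua, hmya⟩ := hG.exists_median u y a
  obtain rfl : m = u := hpeel hmuy (hG.1.interval_subset_halfspace hab hu hmua)
  have hya : G.dist y a = G.dist y m + G.dist m a := hmya.symm
  refine ⟨hya, ?_⟩
  obtain ⟨u', hu'my, hu'mb, hu'yb⟩ := hG.exists_median m y b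
  have hym : G.dist y m = G.dist m y := dist_comm
  have hyu' : G.dist y u' = G.dist u' y := dist_comm
  have hmu' : G.Adj m u' := by
    rw [← dist_eq_one_iff_adj]
    simp only [mem_interval, mem_halfspace] at *
    omega
  refine ⟨u', hmu', hu'my, (hG.mem_halfspace_or hab u').resolve_left fun h => ?_⟩
  exact hmu'.ne (hpeel hu'my h).symm

theorem dist_eq_two_of_convex_below (hG : IsMedianGraph G) (hab : G.Adj a b)
    (hu : u ∈ G.halfspace a b) (hv : v ∈ G.halfspace a b)
    (hbuv : ∀ w ∈ G.halfspace a b, G.dist w v < G.dist u v →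
      G.interval w v ⊆ G.halfspace a b)
    (hbvu : ∀ w ∈ G.halfspace a b, G.dist w u < G.dist v u →
      G.interval w u ⊆ G.halfspace a b)
    (hz : z ∈ G.interval u v) (hzH : z ∈ G.halfspace b a) : G.dist u v = 2 := by
  have hz' : z ∈ G.interval v u := interval_comm u v ▸ hz
  obtain ⟨-, u', huu', hu'z, hu'H⟩ := hG.exists_adj_of_convex_below hab hu hbuv hz hzH
  obtain ⟨-, v', hvv', hv'z, hv'H⟩ := hG.exists_adj_of_convex_below hab hv hbvu hz' hzH
  have hu' := (hG.1.mem_interval_of_mem_interval hu'z hz).1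
  have hv' := (hG.1.mem_interval_of_mem_interval hv'z hz').1
  -- compare the distances to `a` of `u'` and `v'`, which leave `W(a, b)` at both ends of a
  -- geodesic from `u` to `v`
  have e₁ := (hG.exists_adj_of_convex_below hab hu hbuv hu' hu'H).1
  have e₂ := (hG.exists_adj_of_convex_below hab hv hbvu (interval_comm u v ▸ hu') hu'H).1
  have e₃ := (hG.exists_adj_of_convex_below hab hv hbvu hv' hv'H).1
  have e₄ := (hG.exists_adj_of_convex_below hab hu hbuv (interval_comm v u ▸ hv') hv'H).1
  have : G.dist u' u = 1 := dist_eq_one_iff_adj.2 huu'.symm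
  have : G.dist v' v = 1 := dist_eq_one_iff_adj.2 hvv'.symm
  have : G.dist v u = G.dist u v := dist_comm
  rw [mem_interval, dist_eq_one_iff_adj.2 huu'] at hu'
  rw [mem_interval, dist_eq_one_iff_adj.2 hvv'] at hv'
  omega

theorem isGeodConvex_halfspace (hG : IsMedianGraph G) (hab : G.Adj a b) :
    G.IsGeodConvex (G.halfspace a b) := by
  intro u hu v hv
  induction hn : G.dist u v using Nat.strong_induction_on generalizing u v with
  | _ n ih =>
  have hbelow : ∀ {u v}, v ∈ G.halfspace a b → G.dist u v = n →
      ∀ w ∈ G.halfspace a b, G.dist w v < G.dist u v →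
        G.interval w v ⊆ G.halfspace a b := by
    rintro u v hv rfl w hw hlt
    exact ih _ hlt w hw v hv rfl
  intro z hz
  refine (hG.mem_halfspace_or hab z).resolve_right fun hzH => ?_
  have huv := hG.dist_eq_two_of_convex_below hab hu hv (hbelow hv hn)
    (hbelow hu (dist_comm.trans hn)) hz hzH
  have huz : G.dist u z ≠ 0 := fun h =>
    not_mem_halfspace_swap hu (hG.1.dist_eq_zero_iff.1 h ▸ hzH)
  have hzv : G.dist z v ≠ 0 := fun h =>
    not_mem_halfspace_swap hv (hG.1.dist_eq_zero_iff.1 h ▸ hzH)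
  rw [mem_interval] at hz
  obtain rfl : u = v := hG.eq_of_adj_of_adj_of_mem_halfspace hab hzH hu hv
    (dist_eq_one_iff_adj.1 (by rw [dist_comm]; omega)) (dist_eq_one_iff_adj.1 (by omega))
  simp only [dist_self] at huv
  omega

theorem dist_eq_add_one_of_adj_of_mem_halfspace (hG : IsMedianGraph G) (hab : G.Adj a b)
    (hx : x ∈ G.halfspace a b) (hv : v ∈ G.halfspace a b) (hp : p ∈ G.halfspace b a)
    (hvp : G.Adj v p) : G.dist x p = G.dist x v + 1 := by
  have hpv : G.dist p v = 1 := dist_eq_one_iff_adj.2 hvp.symm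
  have hxp : G.dist x p = G.dist p x := dist_comm
  have hxv : G.dist x v = G.dist v x := dist_comm
  rw [hxp, hxv]
  refine (hG.dist_eq_add_one_or hvp x).resolve_right fun h => not_mem_halfspace_swap
    (hG.isGeodConvex_halfspace hab x hx v hv ?_) hp
  rw [mem_interval]
  omega

theorem exists_adj_mem_halfspace_of_mem_interval (hG : IsMedianGraph G) (hab : G.Adj a b)
    (hz : z ∈ G.halfspace a b) (hu : u ∈ G.halfspace a b) (hp : p ∈ G.halfspace b a)
    (hup : G.Adj u p) (hr : r ∈ G.halfspace b a) (hzr : z ∈ G.interval u r) :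
    ∃ w, G.Adj z w ∧ w ∈ G.halfspace b a := by
  obtain ⟨m, hmzp, hmzr, hmpr⟩ := hG.exists_median z p r
  have hzp := hG.dist_eq_add_one_of_adj_of_mem_halfspace hab hz hu hp hup
  have hru := hG.dist_eq_add_one_of_adj_of_mem_halfspace hab.symm hr hp hu hup.symm
  refine ⟨m, dist_eq_one_iff_adj.1 ?_, hG.isGeodConvex_halfspace hab.symm p hp r hr hmpr⟩
  have : G.dist u z = G.dist z u := dist_comm
  have : G.dist u r = G.dist r u := dist_comm
  have : G.dist p r = G.dist r p := dist_comm
  have : G.dist m p = G.dist p m := dist_comm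
  simp only [mem_interval] at *
  omega

theorem exists_adj_mem_halfspace_of_mem_interval_carrier (hG : IsMedianGraph G)
    (hab : G.Adj a b) (hz : z ∈ G.halfspace a b) (hx : x ∈ G.carrier a b)
    (hy : y ∈ G.carrier a b) (hxy : z ∈ G.interval x y) :
    ∃ w, G.Adj z w ∧ w ∈ G.halfspace b a := by
  obtain ⟨p, hxp, ⟨hxH, hpH⟩ | ⟨hxH, hpH⟩⟩ := hx <;>
    obtain ⟨q, hyq, ⟨hyH, hqH⟩ | ⟨hyH, hqH⟩⟩ := hy
  · refine hG.exists_adj_mem_halfspace_of_mem_interval hab hz hxH hpH hxp hqH ?_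
    have := hG.dist_eq_add_one_of_adj_of_mem_halfspace hab hz hyH hqH hyq
    have := hG.dist_eq_add_one_of_adj_of_mem_halfspace hab hxH hyH hqH hyq
    rw [mem_interval] at *
    omega
  · exact hG.exists_adj_mem_halfspace_of_mem_interval hab hz hxH hpH hxp hyH hxy
  · exact hG.exists_adj_mem_halfspace_of_mem_interval hab hz hyH hqH hyq hxH
      (interval_comm x y ▸ hxy)
  · exact absurd (hG.isGeodConvex_halfspace hab.symm x hxH y hyH hxy)
      (not_mem_halfspace_swap hz)

theorem isGeodConvex_carrier (hG : IsMedianGraph G) (hab : G.Adj a b) :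
    G.IsGeodConvex (G.carrier a b) := by
  intro x hx y hy z hz
  rcases hG.mem_halfspace_or hab z with hzH | hzH
  · obtain ⟨w, hzw, hw⟩ :=
      hG.exists_adj_mem_halfspace_of_mem_interval_carrier hab hzH hx hy hz
    exact ⟨w, hzw, Or.inl ⟨hzH, hw⟩⟩
  · rw [← carrier_comm] at hx hy ⊢
    obtain ⟨w, hzw, hw⟩ :=
      hG.exists_adj_mem_halfspace_of_mem_interval_carrier hab.symm hzH hx hy hz
    exact ⟨w, hzw, Or.inl ⟨hzH, hw⟩⟩

theorem theta_iff (hG : IsMedianGraph G) (hab : G.Adj a b) (x y : V) :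
    Theta G (a, b) (x, y) ↔ x ∈ G.halfspace a b ∧ y ∈ G.halfspace b a ∨
      x ∈ G.halfspace b a ∧ y ∈ G.halfspace a b := by
  have hx := hG.mem_halfspace_or hab x
  have hy := hG.mem_halfspace_or hab y
  have : G.dist a x = G.dist x a := dist_comm
  have : G.dist a y = G.dist y a := dist_comm
  have : G.dist b x = G.dist x b := dist_comm
  have : G.dist b y = G.dist y b := dist_comm
  simp only [Theta, mem_halfspace] at *
  omega

theorem setOf_adjTo_eq_carrier (hG : IsMedianGraph G) (hab : G.Adj a b) :
    {v | AdjTo G {f | G.Adj f.1 f.2 ∧ Theta G (a, b) f} v} = G.carrier a b := by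
  ext v
  simp only [carrier, Set.mem_ofPred_eq, ← hG.theta_iff hab]
  constructor
  · rintro ⟨⟨x, y⟩, ⟨hxy, hθ⟩, rfl | rfl⟩
    · exact ⟨y, hxy, hθ⟩
    · exact ⟨x, hxy.symm, Ne.symm hθ⟩
  · rintro ⟨w, hvw, hθ⟩
    exact ⟨(v, w), ⟨hvw, hθ⟩, Or.inl rfl⟩

theorem isGeodConvex_setOf_adjTo (hG : IsMedianGraph G) {h : Set (V × V)}
    (hh : IsHyperplane G h) : G.IsGeodConvex {v | AdjTo G h v} := by
  obtain ⟨⟨a, b⟩, hab, rfl⟩ := hh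
  rw [hG.setOf_adjTo_eq_carrier hab]
  exact hG.isGeodConvex_carrier hab

theorem inter_inter_nonempty (hG : IsMedianGraph G) {A B C : Set V} (hA : G.IsGeodConvex A)
    (hB : G.IsGeodConvex B) (hC : G.IsGeodConvex C) (hAB : (A ∩ B).Nonempty)
    (hAC : (A ∩ C).Nonempty) (hBC : (B ∩ C).Nonempty) : (A ∩ B ∩ C).Nonempty := by
  obtain ⟨x, hxA, hxB⟩ := hAB
  obtain ⟨y, hyA, hyC⟩ := hAC
  obtain ⟨z, hzB, hzC⟩ := hBC
  obtain ⟨m, hxy, hxz, hyz⟩ := hG.exists_median x y z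
  exact ⟨m, ⟨hA x hxA y hyA hxy, hB x hxB z hzB hxz⟩, hC y hyC z hzC hyz⟩

theorem inter_biInter_nonempty (hG : IsMedianGraph G) {ι : Type*} {F : ι → Set V}
    {s : Finset ι} (h_convex : ∀ i ∈ s, G.IsGeodConvex (F i))
    (h_inter : ∀ i ∈ s, ∀ j ∈ s, (F i ∩ F j).Nonempty) {K : Set V} (hK : G.IsGeodConvex K)
    (hKne : K.Nonempty) (hKF : ∀ i ∈ s, (K ∩ F i).Nonempty) :
    (K ∩ ⋂ i ∈ s, F i).Nonempty := by
  classical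
  induction s using Finset.induction_on generalizing K with
  | empty => simpa using hKne
  | insert i s _ ih =>
    simp only [Finset.mem_insert, forall_eq_or_imp] at h_convex h_inter hKF
    rw [Finset.set_biInter_insert, ← Set.inter_assoc]
    exact ih h_convex.2 (fun j hj k hk => (h_inter.2 j hj).2 k hk) (hK.inter h_convex.1) hKF.1
      fun j hj => hG.inter_inter_nonempty hK h_convex.1 (h_convex.2 j hj) hKF.1 (hKF.2 j hj)
        (h_inter.1.2 j hj)

theorem helly_theorem (hG : IsMedianGraph G) {ι : Type*} {F : ι → Set V} {s : Finset ι}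
    (h_convex : ∀ i ∈ s, G.IsGeodConvex (F i))
    (h_inter : ∀ i ∈ s, ∀ j ∈ s, (F i ∩ F j).Nonempty) : (⋂ i ∈ s, F i).Nonempty := by
  have := hG.1.nonempty
  simpa using hG.inter_biInter_nonempty h_convex h_inter isGeodConvex_univ
    Set.univ_nonempty fun i hi => by simpa using h_inter i hi i hi

end IsMedianGraph

theorem IsHyperplane.exists_adjTo {G : SimpleGraph V} {h : Set (V × V)}
    (hh : IsHyperplane G h) : ∃ v, AdjTo G h v := by
  obtain ⟨⟨a, b⟩, hab, rfl⟩ := hh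
  refine ⟨a, (a, b), ⟨hab, ?_⟩, Or.inl rfl⟩
  simp [Theta, dist_eq_one_iff_adj.2 hab, dist_eq_one_iff_adj.2 hab.symm]

theorem isContactClique_Wv (G : SimpleGraph V) (v : V) : IsContactClique G (Wv G v) :=
  ⟨fun _ hh => hh.1, fun _ hh _ hh' _ => ⟨v, hh.2, hh'.2⟩⟩

/-- every maximal finite clique of the contact graph is of the form `Wv G v`. -/
theorem max_finite_clique_eq_Wv (G : SimpleGraph V) (hG : IsMedianGraph G)
    (C : Set (Set (V × V))) (hfin : C.Finite) (hC : IsMaxContactClique G C) :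
    ∃ v : V, C = Wv G v := by
  obtain ⟨⟨hhyp, hcontact⟩, hmax⟩ := hC
  obtain ⟨v, hv⟩ : (⋂ h ∈ hfin.toFinset, {v | AdjTo G h v}).Nonempty := by
    refine hG.helly_theorem
      (fun h hh => hG.isGeodConvex_setOf_adjTo (hhyp h (hfin.mem_toFinset.1 hh)))
      fun h hh h' hh' => ?_
    rw [Set.Finite.mem_toFinset] at hh hh'
    obtain rfl | hne := eq_or_ne h h'
    · obtain ⟨v, hv⟩ := (hhyp h hh).exists_adjTo
      exact ⟨v, hv, hv⟩
    · exact hcontact h hh h' hh' hne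
  have hCv : C ⊆ Wv G v := fun h hh =>
    ⟨hhyp h hh, Set.mem_iInter₂.1 hv h (hfin.mem_toFinset.2 hh)⟩
  exact ⟨v, (hmax _ (isContactClique_Wv G v) hCv).symm⟩
end

section
/- Let Γ be a finite graph such that the right-angled Coxeter group W_Γ has no finite direct factors (equivalently Γ is not a cone). Then the universal cover Y_Γ of the Davis complex has a hyperplane with extremal vertices if and only if there exist distinct vertices a, b of Γ with St(a) ⊆ St(b). -/
open SimpleGraph

variable {V : Type*}

section Davis

/-- Relations of the right-angled Coxeter group `W_Γ`. -/
def racgRels (A : Type*) (Γ : SimpleGraph A) : Set (FreeGroup A) :=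
  {x | ∃ a : A, x = FreeGroup.of a ^ 2} ∪
  {x | ∃ a b : A, Γ.Adj a b ∧ x = (FreeGroup.of a * FreeGroup.of b) ^ 2}

/-- The right-angled Coxeter group `W_Γ`. -/
abbrev RACG (A : Type*) (Γ : SimpleGraph A) := PresentedGroup (racgRels A Γ)

/-- The standard generator of `W_Γ` corresponding to the vertex `a` of `Γ`. -/
def racgGen {A : Type*} (Γ : SimpleGraph A) (a : A) : RACG A Γ :=
  PresentedGroup.of a

/-- The 1-skeleton of the universal cover `Y_Γ` of the Davis complex: the Cayley graph of
`W_Γ` with respect to the standard generators. -/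
def davisGraph (A : Type*) (Γ : SimpleGraph A) : SimpleGraph (RACG A Γ) :=
  SimpleGraph.fromRel (fun g h => ∃ a : A, h = g * racgGen Γ a)

/-- The hyperplane `h` of `Y_Γ` is labelled by the vertex `a` of `Γ`. -/
def HypLabel {A : Type*} (Γ : SimpleGraph A) (h : Set (RACG A Γ × RACG A Γ)) (a : A) :
    Prop :=
  ∃ e ∈ h, e.2 = e.1 * racgGen Γ a

/-- The star of a vertex of `Γ`. -/
def starSet {A : Type*} (Γ : SimpleGraph A) (a : A) : Set A := {x | x = a ∨ Γ.Adj a x}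

/-- `Γ` is a cone (equivalently, `W_Γ` has a finite direct factor). -/
def GraphIsCone {A : Type*} (Γ : SimpleGraph A) : Prop :=
  ∃ a : A, ∀ b : A, b ≠ a → Γ.Adj a b

end Davis

/-!
The 1-skeleton of `Y_Γ` is the Cayley graph of `W_Γ`, and its hyperplanes are the walls of the
reflections `x s_a x⁻¹`. Tits' reflection cocycle `W_Γ → (W_Γ → ℤˣ) ⋊ W_Γ` counts walls: the walls
separating `x` from `y` are the `ℓ(x⁻¹y)` entries of the left inversion sequence of a reduced word
for `x⁻¹y`, and crossing the edge `(y, y s_a)` toggles exactly the wall `y s_a y⁻¹`. Comparing the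
four distances between their endpoints shows that two edges are Djoković–Winkler related iff
they carry the same reflection. Consequently the hyperplanes meeting the edge `(x, x s_a)` in a square
are the walls `x s_b x⁻¹` with `b ∈ lk(a)`, two of them crossing iff their labels are adjacent:
the link of that vertex of the hyperplane is a cone iff `lk(a)` is a cone, i.e. iff
`St(a) ⊆ St(b)` for some `b ≠ a`.
-/

theorem commute_iff_mul_mul_self_eq_one {G : Type*} [Group G] {x y : G} (hx : x * x = 1)
    (hy : y * y = 1) : Commute x y ↔ x * y * (x * y) = 1 := by
  rw [← eq_inv_iff_mul_eq_one, mul_inv_rev, inv_eq_of_mul_eq_one_right hx,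
    inv_eq_of_mul_eq_one_right hy]
  rfl

theorem inv_mul_mul_eq_iff {G : Type*} [Group G] {u t r : G} :
    u⁻¹ * t * u = r ↔ t = u * r * u⁻¹ := by
  constructor <;> intro h <;> [rw [← h]; rw [h]] <;> group

theorem CoxeterSystem.commute_simple_of_eq_two {B W : Type*} [Group W] {M : CoxeterMatrix B}
    (cs : CoxeterSystem M W) {i j : B} (h : M i j = 2) : Commute (cs.simple i) (cs.simple j) := by
  have hpow := cs.simple_mul_simple_pow i j
  rw [h, sq] at hpow
  exact (commute_iff_mul_mul_self_eq_one (cs.simple_mul_simple_self i)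
    (cs.simple_mul_simple_self j)).2 hpow

theorem conj_mul_eq_conj_iff_commute {G : Type*} [Group G] {x y z : G} :
    x * y * z * (x * y)⁻¹ = x * z * x⁻¹ ↔ Commute y z := by
  rw [mul_inv_rev, ← mul_assoc, mul_left_inj, mul_assoc x, mul_assoc x, mul_right_inj,
    mul_inv_eq_iff_eq_mul]
  rfl

theorem starSet_subset_starSet_iff {A : Type*} {Γ : SimpleGraph A} {a b : A} (hab : a ≠ b) :
    starSet Γ a ⊆ starSet Γ b ↔ Γ.Adj a b ∧ ∀ c, Γ.Adj a c → c ≠ b → Γ.Adj b c := by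
  constructor
  · intro h
    refine ⟨(h (Or.inl rfl)).resolve_left hab |>.symm, fun c hac hcb => ?_⟩
    exact (h (Or.inr hac)).resolve_left hcb
  · rintro ⟨hab', h⟩ c (rfl | hac)
    · exact Or.inr hab'.symm
    · by_cases hcb : c = b
      · exact Or.inl hcb
      · exact Or.inr (h c hac hcb)

open Classical in
theorem Set.ncard_symmDiff_singleton {α : Type*} {E : Set α} (hE : E.Finite) (r : α) :
    ((symmDiff E {r}).ncard : ℤ) = E.ncard + if r ∈ E then -1 else 1 := by
  by_cases h : r ∈ E
  · have : symmDiff E {r} = E \ {r} := by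
      ext x; simp only [Set.mem_symmDiff, Set.mem_sdiff, Set.mem_singleton_iff]; grind
    rw [this, if_pos h, ← Set.ncard_sdiff_singleton_add_one h hE]
    push_cast; ring
  · have : symmDiff E {r} = insert r E := by
      ext x; simp only [Set.mem_symmDiff, Set.mem_insert_iff, Set.mem_singleton_iff]; grind
    rw [this, Set.ncard_insert_of_notMem h hE, if_neg h]
    push_cast; ring

theorem Set.ncard_add_ncard_symmDiff_symmDiff_ne_iff {α : Type*} {E : Set α} (hE : E.Finite)
    (r r' : α) :
    E.ncard + (symmDiff (symmDiff E {r}) {r'}).ncard ≠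
      (symmDiff E {r'}).ncard + (symmDiff E {r}).ncard ↔ r = r' := by
  have hE' : (symmDiff E {r}).Finite := hE.union (Set.finite_singleton r) |>.subset symmDiff_le_sup
  rw [Ne, ← Nat.cast_inj (R := ℤ)]
  push_cast
  rw [ncard_symmDiff_singleton hE', ncard_symmDiff_singleton hE, ncard_symmDiff_singleton hE]
  by_cases hr : r ∈ E <;> by_cases hr' : r' ∈ E <;> rcases eq_or_ne r r' with rfl | hrr <;>
    simp_all [Set.mem_symmDiff, eq_comm] <;> omega

namespace RACG

variable {A : Type*} {Γ : SimpleGraph A}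

theorem gen_mul_self (a : A) : racgGen Γ a * racgGen Γ a = 1 := by
  simpa [sq, racgGen, PresentedGroup.of] using
    PresentedGroup.one_of_mem (rels := racgRels A Γ) (Or.inl ⟨a, rfl⟩)

theorem gen_inv (a : A) : (racgGen Γ a)⁻¹ = racgGen Γ a :=
  inv_eq_of_mul_eq_one_right (gen_mul_self a)

theorem commute_gen_of_adj {a b : A} (h : Γ.Adj a b) :
    Commute (racgGen Γ a) (racgGen Γ b) :=
  (commute_iff_mul_mul_self_eq_one (gen_mul_self a) (gen_mul_self b)).2 <| by
    simpa [sq, racgGen, PresentedGroup.of] using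
      PresentedGroup.one_of_mem (rels := racgRels A Γ) (Or.inr ⟨a, b, h, rfl⟩)

variable (Γ) in
def lift {G : Type*} [Group G] (f : A → G) (hsq : ∀ a, f a * f a = 1)
    (hcomm : ∀ a b, Γ.Adj a b → Commute (f a) (f b)) : RACG A Γ →* G :=
  PresentedGroup.toGroup (f := f) <| by
    rintro r (⟨a, rfl⟩ | ⟨a, b, hab, rfl⟩)
    · simp [sq, hsq]
    · simpa [sq] using (commute_iff_mul_mul_self_eq_one (hsq a) (hsq b)).1 (hcomm a b hab)

@[simp]
theorem lift_gen {G : Type*} [Group G] {f : A → G} {hsq : ∀ a, f a * f a = 1}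
    {hcomm : ∀ a b, Γ.Adj a b → Commute (f a) (f b)} (a : A) :
    lift Γ f hsq hcomm (racgGen Γ a) = f a :=
  PresentedGroup.toGroup.of _

theorem hom_ext {G : Type*} [Group G] {φ ψ : RACG A Γ →* G}
    (h : ∀ a, φ (racgGen Γ a) = ψ (racgGen Γ a)) : φ = ψ :=
  PresentedGroup.ext h

variable (Γ) in
open Classical in
/-- In a `CoxeterMatrix`, the entry `0` stands for the absence of a relation. -/
noncomputable def coxeterMatrix : CoxeterMatrix A where
  M := Matrix.of fun a b => if a = b then 1 else if Γ.Adj a b then 2 else 0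
  isSymm := by
    ext a b
    simp only [Matrix.transpose_apply, Matrix.of_apply, eq_comm, Γ.adj_comm]
  diagonal := by simp
  off_diagonal a b hab := by simp only [Matrix.of_apply, if_neg hab]; split <;> omega

theorem coxeterMatrix_of_adj {a b : A} (h : Γ.Adj a b) : coxeterMatrix Γ a b = 2 := by
  simp [coxeterMatrix, h.ne, h]

theorem isLiftable_gen : (coxeterMatrix Γ).IsLiftable (racgGen Γ) := by
  intro a b
  by_cases hab : a = b
  · simp [coxeterMatrix, hab, gen_mul_self]
  by_cases hadj : Γ.Adj a b
  · rw [coxeterMatrix_of_adj hadj, sq]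
    exact (commute_iff_mul_mul_self_eq_one (gen_mul_self a) (gen_mul_self b)).1
      (commute_gen_of_adj hadj)
  · simp [coxeterMatrix, hab, hadj]

variable (Γ) in
noncomputable def coxeterSystem : CoxeterSystem (coxeterMatrix Γ) (RACG A Γ) where
  mulEquiv := MonoidHom.toMulEquiv
    (lift Γ (coxeterMatrix Γ).toCoxeterSystem.simple
      (coxeterMatrix Γ).toCoxeterSystem.simple_mul_simple_self
      fun _ _ hab => (coxeterMatrix Γ).toCoxeterSystem.commute_simple_of_eq_two
        (coxeterMatrix_of_adj hab))
    ((coxeterMatrix Γ).toCoxeterSystem.lift ⟨racgGen Γ, isLiftable_gen⟩)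
    (hom_ext fun a => by
      rw [MonoidHom.comp_apply, lift_gen, CoxeterSystem.lift_apply_simple, MonoidHom.id_apply])
    ((coxeterMatrix Γ).toCoxeterSystem.ext_simple fun a => by
      rw [MonoidHom.comp_apply, CoxeterSystem.lift_apply_simple, lift_gen, MonoidHom.id_apply])

@[simp]
theorem coxeterSystem_simple (a : A) : (coxeterSystem Γ).simple a = racgGen Γ a :=
  (coxeterMatrix Γ).toCoxeterSystem.lift_apply_simple isLiftable_gen a

variable (Γ) in
open Classical in
noncomputable def labelParity : RACG A Γ →* (A → ℤˣ) :=
  lift Γ (fun a => Pi.mulSingle a (-1)) (fun a => by simp [← Pi.mulSingle_mul])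
    fun _ _ _ => Commute.all _ _

open Classical in
theorem labelParity_gen (a : A) : labelParity Γ (racgGen Γ a) a = -1 := by
  simp [labelParity]

open Classical in
theorem labelParity_gen_of_ne {a b : A} (h : a ≠ b) : labelParity Γ (racgGen Γ b) a = 1 := by
  simp [labelParity, h]

theorem gen_ne_one (a : A) : racgGen Γ a ≠ 1 := fun h => by
  simpa [h] using labelParity_gen (Γ := Γ) a

theorem eq_of_conj_gen_eq {x y : RACG A Γ} {a b : A}
    (h : x * racgGen Γ a * x⁻¹ = y * racgGen Γ b * y⁻¹) : a = b := by
  by_contra hab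
  have := congrFun (congrArg (labelParity Γ) h) a
  simp only [map_mul, map_inv, mul_inv_cancel_comm, labelParity_gen, labelParity_gen_of_ne hab]
    at this
  exact units_ne_neg_self 1 this.symm

theorem gen_injective : Function.Injective (racgGen Γ) := fun a b h =>
  eq_of_conj_gen_eq (x := 1) (y := 1) (by rw [h])

open Equiv in
theorem adj_of_commute_gen {a b : A} (hab : a ≠ b) (h : Commute (racgGen Γ a) (racgGen Γ b)) :
    Γ.Adj a b := by
  classical
  by_contra hadj
  let f : A → Perm (Fin 3) := fun c => if c = a then swap 0 1 else if c = b then swap 1 2 else 1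
  have hsq : ∀ c, f c * f c = 1 := by intro c; simp only [f]; split_ifs <;> simp
  have htriv : ∀ c d, Γ.Adj c d → f c = 1 ∨ f d = 1 := by
    intro c d hcd
    by_cases hc : c = a
    · subst hc
      have hdb : d ≠ b := by rintro rfl; exact hadj hcd
      exact Or.inr (by simp [f, hcd.ne.symm, hdb])
    by_cases hc' : c = b
    · subst hc'
      have hda : d ≠ a := by rintro rfl; exact hadj hcd.symm
      exact Or.inr (by simp [f, hcd.ne.symm, hda])
    · exact Or.inl (by simp [f, hc, hc'])
  have hf := congrArg (lift Γ f hsq fun c d hcd => (htriv c d hcd).elim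
    (fun h => h ▸ Commute.one_left _) (fun h => h ▸ Commute.one_right _)) h.eq
  simp only [map_mul, lift_gen, f, if_neg hab.symm, ↓reduceIte] at hf
  exact absurd hf (by decide)

theorem commute_gen_iff {a b : A} :
    Commute (racgGen Γ a) (racgGen Γ b) ↔ a = b ∨ Γ.Adj a b := by
  constructor
  · intro h
    by_cases hab : a = b
    · exact Or.inl hab
    · exact Or.inr (adj_of_commute_gen hab h)
  · rintro (rfl | h)
    · exact Commute.refl _
    · exact commute_gen_of_adj h

variable (Γ) in
noncomputable def conjArrow : RACG A Γ →* MulAut (RACG A Γ → ℤˣ) :=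
  mulAutArrow.comp (MulEquiv.toMonoidHom ConjAct.toConjAct)

theorem conjArrow_apply (u : RACG A Γ) (f : RACG A Γ → ℤˣ) (t : RACG A Γ) :
    conjArrow Γ u f t = f (u⁻¹ * t * u) := by
  change f ((ConjAct.toConjAct u)⁻¹ • t) = _
  simp [ConjAct.smul_def]

open Classical in
theorem conjArrow_mulSingle (u r : RACG A Γ) (x : ℤˣ) :
    conjArrow Γ u (Pi.mulSingle r x) = Pi.mulSingle (u * r * u⁻¹) x := by
  ext t
  simp only [conjArrow_apply, Pi.mulSingle_apply, inv_mul_mul_eq_iff]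

variable (Γ) in
open Classical in
/-- Tits' reflection cocycle. It is a homomorphism because `s_a` fixes its own wall and commuting
generators fix each other's walls. -/
noncomputable def titsRep : RACG A Γ →* (RACG A Γ → ℤˣ) ⋊[conjArrow Γ] RACG A Γ :=
  lift Γ (fun a => ⟨Pi.mulSingle (racgGen Γ a) (-1), racgGen Γ a⟩)
    (fun a => SemidirectProduct.ext
      (by simp [conjArrow_mulSingle, ← Pi.mulSingle_mul]) (gen_mul_self a))
    fun a b hab => by
      have hc := commute_gen_of_adj (Γ := Γ) hab
      refine SemidirectProduct.ext ?_ hc.eq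
      have hb : racgGen Γ a * racgGen Γ b * (racgGen Γ a)⁻¹ = racgGen Γ b := by
        rw [hc.eq, mul_inv_cancel_right]
      have ha : racgGen Γ b * racgGen Γ a * (racgGen Γ b)⁻¹ = racgGen Γ a := by
        rw [← hc.eq, mul_inv_cancel_right]
      simp only [SemidirectProduct.mul_left, conjArrow_mulSingle, ha, hb]
      exact mul_comm _ _

/-- For a reflection `t`, `wallSign w t = -1` iff the wall of `t` separates `1` from `w`. -/
noncomputable def wallSign (w t : RACG A Γ) : ℤˣ := (titsRep Γ w).left t

theorem titsRep_right (w : RACG A Γ) : (titsRep Γ w).right = w :=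
  DFunLike.congr_fun (hom_ext (φ := SemidirectProduct.rightHom.comp (titsRep Γ))
    (ψ := MonoidHom.id _) fun a => by simp [titsRep]) w

theorem wallSign_mul (u v t : RACG A Γ) :
    wallSign (u * v) t = wallSign u t * wallSign v (u⁻¹ * t * u) := by
  simp [wallSign, SemidirectProduct.mul_left, conjArrow_apply, titsRep_right]

open Classical in
theorem wallSign_gen (a : A) (t : RACG A Γ) :
    wallSign (racgGen Γ a) t = if t = racgGen Γ a then -1 else 1 := by
  simp [wallSign, titsRep, Pi.mulSingle_apply]

theorem wallSign_one (t : RACG A Γ) : wallSign 1 t = 1 := by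
  simp [wallSign]

theorem wallSign_inv (u t : RACG A Γ) : wallSign u⁻¹ (u⁻¹ * t * u) = wallSign u t := by
  have h := wallSign_mul u u⁻¹ t
  rw [mul_inv_cancel, wallSign_one, eq_comm, ← eq_inv_iff_mul_eq_one, Int.units_inv_eq_self] at h
  exact h.symm

open Classical in
theorem wallSign_mul_gen (w : RACG A Γ) (a : A) (t : RACG A Γ) :
    wallSign (w * racgGen Γ a) t =
      wallSign w t * if t = w * racgGen Γ a * w⁻¹ then -1 else 1 := by
  rw [wallSign_mul, wallSign_gen, if_congr inv_mul_mul_eq_iff rfl rfl]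

open Classical in
theorem wallSign_wordProd (ω : List A) (t : RACG A Γ) :
    wallSign ((coxeterSystem Γ).wordProd ω) t =
      (-1) ^ ((coxeterSystem Γ).leftInvSeq ω).count t := by
  induction ω generalizing t with
  | nil => simp [wallSign_one]
  | cons a ω ih =>
    have hconj : MulAut.conj (racgGen Γ a) ((racgGen Γ a)⁻¹ * t * racgGen Γ a) = t := by
      simp [MulAut.conj_apply, mul_assoc]
    rw [CoxeterSystem.wordProd_cons, wallSign_mul, ih, coxeterSystem_simple, wallSign_gen,
      CoxeterSystem.leftInvSeq, List.count_cons, coxeterSystem_simple, ← hconj,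
      List.count_map_of_injective _ _ (MulAut.conj _).injective, hconj, pow_add]
    split_ifs <;> simp_all

theorem wallSign_wordProd_eq_neg_one_iff {ω : List A} (hω : (coxeterSystem Γ).IsReduced ω)
    (t : RACG A Γ) :
    wallSign ((coxeterSystem Γ).wordProd ω) t = -1 ↔ t ∈ (coxeterSystem Γ).leftInvSeq ω := by
  classical
  have hle := List.nodup_iff_count_le_one.1 hω.nodup_leftInvSeq t
  rw [wallSign_wordProd, ← List.count_pos_iff]
  interval_cases ((coxeterSystem Γ).leftInvSeq ω).count t <;> simp

variable (Γ) in
/-- The walls separating the vertices `x` and `y`, each wall named by its reflection. -/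
def separatingWalls (x y : RACG A Γ) : Set (RACG A Γ) :=
  {t | wallSign (x⁻¹ * y) (x⁻¹ * t * x) = -1}

theorem separatingWalls_comm (x y : RACG A Γ) :
    separatingWalls Γ x y = separatingWalls Γ y x := by
  ext t
  have h := wallSign_inv (x⁻¹ * y) (x⁻¹ * t * x)
  simp only [mul_inv_rev, inv_inv] at h
  simp only [separatingWalls, Set.mem_ofPred_eq, ← h]
  group

theorem separatingWalls_mul_gen (x y : RACG A Γ) (a : A) :
    separatingWalls Γ x (y * racgGen Γ a) =
      symmDiff (separatingWalls Γ x y) {y * racgGen Γ a * y⁻¹} := by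
  classical
  ext t
  have hiff : x⁻¹ * t * x = x⁻¹ * y * racgGen Γ a * (x⁻¹ * y)⁻¹ ↔ t = y * racgGen Γ a * y⁻¹ := by
    rw [inv_mul_mul_eq_iff, show x * (x⁻¹ * y * racgGen Γ a * (x⁻¹ * y)⁻¹) * x⁻¹ =
      y * racgGen Γ a * y⁻¹ by group]
  simp only [separatingWalls, Set.mem_symmDiff, Set.mem_ofPred_eq, Set.mem_singleton_iff,
    ← mul_assoc, wallSign_mul_gen, if_congr hiff rfl rfl]
  generalize wallSign (x⁻¹ * y) (x⁻¹ * t * x) = ε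
  rcases Int.units_eq_one_or ε with rfl | rfl <;> by_cases ht : t = y * racgGen Γ a * y⁻¹ <;>
    simp [ht, units_ne_neg_self]

theorem separatingWalls_eq_image {x y : RACG A Γ} {ω : List A}
    (hω : (coxeterSystem Γ).IsReduced ω) (h : x⁻¹ * y = (coxeterSystem Γ).wordProd ω) :
    separatingWalls Γ x y =
      (fun t => x * t * x⁻¹) '' {t | t ∈ (coxeterSystem Γ).leftInvSeq ω} := by
  ext t
  simp only [separatingWalls, Set.mem_ofPred_eq, Set.mem_image, h,
    wallSign_wordProd_eq_neg_one_iff hω]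
  constructor
  · intro ht
    exact ⟨_, ht, by group⟩
  · rintro ⟨t, ht, rfl⟩
    simpa [mul_assoc] using ht

theorem separatingWalls_finite (x y : RACG A Γ) : (separatingWalls Γ x y).Finite := by
  obtain ⟨ω, hω, h⟩ := (coxeterSystem Γ).exists_isReduced (x⁻¹ * y)
  rw [separatingWalls_eq_image hω h]
  exact ((coxeterSystem Γ).leftInvSeq ω).finite_toSet.image _

theorem ncard_separatingWalls (x y : RACG A Γ) :
    (separatingWalls Γ x y).ncard = (coxeterSystem Γ).length (x⁻¹ * y) := by
  classical
  obtain ⟨ω, hω, h⟩ := (coxeterSystem Γ).exists_isReduced (x⁻¹ * y)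
  rw [separatingWalls_eq_image hω h, Set.ncard_image_of_injective _ fun _ _ => by simp,
    ← List.coe_toFinset, Set.ncard_coe_finset, List.toFinset_card_of_nodup hω.nodup_leftInvSeq,
    CoxeterSystem.length_leftInvSeq, h, hω]

end RACG

section DavisGraph

open RACG

variable {A : Type*} {Γ : SimpleGraph A}

theorem davisGraph_adj_iff {g h : RACG A Γ} :
    (davisGraph A Γ).Adj g h ↔ ∃ a, h = g * racgGen Γ a := by
  rw [davisGraph, SimpleGraph.fromRel_adj]
  constructor
  · rintro ⟨-, ⟨a, rfl⟩ | ⟨a, rfl⟩⟩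
    · exact ⟨a, rfl⟩
    · exact ⟨a, by rw [mul_assoc, gen_mul_self, mul_one]⟩
  · rintro ⟨a, rfl⟩
    exact ⟨fun h => gen_ne_one a (by simpa using h), Or.inl ⟨a, rfl⟩⟩

theorem davisGraph_adj_mul_gen (g : RACG A Γ) (a : A) :
    (davisGraph A Γ).Adj g (g * racgGen Γ a) :=
  davisGraph_adj_iff.2 ⟨a, rfl⟩

theorem exists_walk_wordProd (g : RACG A Γ) (ω : List A) :
    ∃ p : (davisGraph A Γ).Walk g (g * (coxeterSystem Γ).wordProd ω), p.length = ω.length := by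
  induction ω generalizing g with
  | nil => exact ⟨SimpleGraph.Walk.nil.copy rfl (by simp), by simp⟩
  | cons a ω ih =>
    obtain ⟨p, hp⟩ := ih (g * racgGen Γ a)
    have hend : g * racgGen Γ a * (coxeterSystem Γ).wordProd ω =
        g * (coxeterSystem Γ).wordProd (a :: ω) := by
      simp [CoxeterSystem.wordProd_cons, mul_assoc]
    exact ⟨(p.cons (davisGraph_adj_mul_gen g a)).copy rfl hend, by simp [hp]⟩

theorem length_le_walk_length {g h : RACG A Γ} (p : (davisGraph A Γ).Walk g h) :
    (coxeterSystem Γ).length (g⁻¹ * h) ≤ p.length := by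
  induction p with
  | nil => simp
  | @cons u v w huv p ih =>
    obtain ⟨a, rfl⟩ := davisGraph_adj_iff.1 huv
    have hsplit : u⁻¹ * w = racgGen Γ a * ((u * racgGen Γ a)⁻¹ * w) := by
      rw [mul_inv_rev, gen_inv, ← mul_assoc, ← mul_assoc, gen_mul_self, one_mul]
    have hgen := (coxeterSystem Γ).length_simple a
    rw [coxeterSystem_simple] at hgen
    have := (coxeterSystem Γ).length_mul_le (racgGen Γ a) ((u * racgGen Γ a)⁻¹ * w)
    rw [SimpleGraph.Walk.length_cons, hsplit]
    omega

theorem davisGraph_dist (g h : RACG A Γ) :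
    (davisGraph A Γ).dist g h = (coxeterSystem Γ).length (g⁻¹ * h) := by
  obtain ⟨ω, hω, hgh⟩ := (coxeterSystem Γ).exists_isReduced (g⁻¹ * h)
  obtain ⟨p, hp⟩ := exists_walk_wordProd g ω
  have hend : g * (coxeterSystem Γ).wordProd ω = h := by rw [← hgh]; group
  refine le_antisymm ?_ ?_
  · calc (davisGraph A Γ).dist g h ≤ (p.copy rfl hend).length := SimpleGraph.dist_le _
      _ = _ := by rw [SimpleGraph.Walk.length_copy, hp, hgh, hω]
  · obtain ⟨q, hq⟩ := (p.copy rfl hend).reachable.exists_walk_length_eq_dist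
    exact hq ▸ length_le_walk_length q

theorem davisGraph_dist_eq_ncard (g h : RACG A Γ) :
    (davisGraph A Γ).dist g h = (separatingWalls Γ g h).ncard := by
  rw [davisGraph_dist, ncard_separatingWalls]

end DavisGraph

section Hyperplanes

open RACG

variable {A : Type*} {Γ : SimpleGraph A}

theorem theta_davisGraph_iff (g h : RACG A Γ) (a b : A) :
    Theta (davisGraph A Γ) (g, g * racgGen Γ a) (h, h * racgGen Γ b) ↔
      g * racgGen Γ a * g⁻¹ = h * racgGen Γ b * h⁻¹ := by
  have hleft : separatingWalls Γ (g * racgGen Γ a) h =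
      symmDiff (separatingWalls Γ g h) {g * racgGen Γ a * g⁻¹} := by
    rw [separatingWalls_comm, separatingWalls_mul_gen, separatingWalls_comm]
  simp only [Theta, davisGraph_dist_eq_ncard, separatingWalls_mul_gen, hleft]
  exact Set.ncard_add_ncard_symmDiff_symmDiff_ne_iff (separatingWalls_finite g h) _ _

variable (Γ) in
/-- The hyperplane of `Y_Γ` dual to the wall of the reflection `r`. -/
def wallHyperplane (r : RACG A Γ) : Set (RACG A Γ × RACG A Γ) :=
  {e | ∃ a, e.2 = e.1 * racgGen Γ a ∧ e.1 * racgGen Γ a * e.1⁻¹ = r}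

theorem mul_gen_mem_wallHyperplane (x : RACG A Γ) (a : A) :
    (x, x * racgGen Γ a) ∈ wallHyperplane Γ (x * racgGen Γ a * x⁻¹) :=
  ⟨a, rfl, rfl⟩

theorem setOf_theta_eq_wallHyperplane (g : RACG A Γ) (a : A) :
    {f | (davisGraph A Γ).Adj f.1 f.2 ∧ Theta (davisGraph A Γ) (g, g * racgGen Γ a) f} =
      wallHyperplane Γ (g * racgGen Γ a * g⁻¹) := by
  ext ⟨p, q⟩
  simp only [Set.mem_ofPred_eq, wallHyperplane, davisGraph_adj_iff]
  constructor
  · rintro ⟨⟨c, rfl⟩, hθ⟩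
    exact ⟨c, rfl, ((theta_davisGraph_iff g p a c).1 hθ).symm⟩
  · rintro ⟨c, rfl, hc⟩
    exact ⟨⟨c, rfl⟩, (theta_davisGraph_iff g p a c).2 hc.symm⟩

theorem isHyperplane_davisGraph_iff {H : Set (RACG A Γ × RACG A Γ)} :
    IsHyperplane (davisGraph A Γ) H ↔ ∃ x a, H = wallHyperplane Γ (x * racgGen Γ a * x⁻¹) := by
  constructor
  · rintro ⟨⟨g, q⟩, hadj, rfl⟩
    obtain ⟨a, rfl⟩ : ∃ a, q = g * racgGen Γ a := davisGraph_adj_iff.1 hadj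
    exact ⟨g, a, setOf_theta_eq_wallHyperplane g a⟩
  · rintro ⟨g, a, rfl⟩
    exact ⟨(g, g * racgGen Γ a), davisGraph_adj_mul_gen g a,
      (setOf_theta_eq_wallHyperplane g a).symm⟩

theorem isHyperplane_wallHyperplane (x : RACG A Γ) (a : A) :
    IsHyperplane (davisGraph A Γ) (wallHyperplane Γ (x * racgGen Γ a * x⁻¹)) :=
  isHyperplane_davisGraph_iff.2 ⟨x, a, rfl⟩

theorem exists_eq_wallHyperplane_of_mem {H : Set (RACG A Γ × RACG A Γ)} {e : RACG A Γ × RACG A Γ}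
    (hH : IsHyperplane (davisGraph A Γ) H) (he : e ∈ H) :
    ∃ x a, e = (x, x * racgGen Γ a) ∧ H = wallHyperplane Γ (x * racgGen Γ a * x⁻¹) := by
  obtain ⟨y, b, rfl⟩ := isHyperplane_davisGraph_iff.1 hH
  obtain ⟨a, he2, hconj⟩ := he
  exact ⟨e.1, a, Prod.ext rfl he2, by rw [hconj]⟩

theorem mem_wallHyperplane_conj_gen {p q x : RACG A Γ} {b : A} :
    (p, q) ∈ wallHyperplane Γ (x * racgGen Γ b * x⁻¹) ↔
      q = p * racgGen Γ b ∧ p * racgGen Γ b * p⁻¹ = x * racgGen Γ b * x⁻¹ := by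
  constructor
  · rintro ⟨c, hq, hc⟩
    obtain rfl := eq_of_conj_gen_eq hc
    exact ⟨hq, hc⟩
  · rintro ⟨hq, hb⟩
    exact ⟨b, hq, hb⟩

theorem wallHyperplane_conj_gen_inj {x : RACG A Γ} {a b : A} :
    wallHyperplane Γ (x * racgGen Γ a * x⁻¹) = wallHyperplane Γ (x * racgGen Γ b * x⁻¹) ↔
      a = b := by
  refine ⟨fun h => ?_, fun h => h ▸ rfl⟩
  have hmem := h ▸ mul_gen_mem_wallHyperplane x a
  exact gen_injective (mul_left_cancel (mem_wallHyperplane_conj_gen.1 hmem).1)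

theorem hypAdjEdge_iff {u : Set (RACG A Γ × RACG A Γ)} (hu : IsHyperplane (davisGraph A Γ) u)
    (x : RACG A Γ) (a : A) :
    HypAdjEdge (davisGraph A Γ) u (x, x * racgGen Γ a) ↔
      ∃ b, u = wallHyperplane Γ (x * racgGen Γ b * x⁻¹) ∧
        Commute (racgGen Γ a) (racgGen Γ b) := by
  constructor
  · rintro ⟨c, d, hc, hd, -⟩
    obtain ⟨x', b, hxc, rfl⟩ := exists_eq_wallHyperplane_of_mem hu hc
    obtain ⟨rfl, rfl⟩ := Prod.mk.inj hxc
    exact ⟨b, rfl, conj_mul_eq_conj_iff_commute.1 (mem_wallHyperplane_conj_gen.1 hd).2⟩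
  · rintro ⟨b, rfl, hab⟩
    refine ⟨x * racgGen Γ b, x * racgGen Γ a * racgGen Γ b, mul_gen_mem_wallHyperplane x b,
      mem_wallHyperplane_conj_gen.2 ⟨rfl, conj_mul_eq_conj_iff_commute.2 hab⟩, ?_⟩
    rw [mul_assoc, hab.eq, ← mul_assoc]
    exact davisGraph_adj_mul_gen _ a

theorem transverse_wallHyperplane_iff (x : RACG A Γ) (b c : A) :
    Transverse (davisGraph A Γ) (wallHyperplane Γ (x * racgGen Γ b * x⁻¹))
      (wallHyperplane Γ (x * racgGen Γ c * x⁻¹)) ↔ Commute (racgGen Γ b) (racgGen Γ c) := by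
  constructor
  · rintro ⟨p, q, r, s, hpq, hrs, hpr, hqs, -⟩
    obtain ⟨rfl, -⟩ := mem_wallHyperplane_conj_gen.1 hpq
    obtain ⟨rfl, -⟩ := mem_wallHyperplane_conj_gen.1 hpr
    obtain ⟨hs, -⟩ := mem_wallHyperplane_conj_gen.1 hrs
    obtain ⟨hs', -⟩ := mem_wallHyperplane_conj_gen.1 hqs
    rw [hs, mul_assoc, mul_assoc] at hs'
    exact (mul_left_cancel hs').symm
  · intro hbc
    have hcb : x * racgGen Γ c * racgGen Γ b = x * racgGen Γ b * racgGen Γ c := by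
      rw [mul_assoc, ← hbc.eq, ← mul_assoc]
    refine ⟨x, x * racgGen Γ b, x * racgGen Γ c, x * racgGen Γ b * racgGen Γ c,
      mul_gen_mem_wallHyperplane x b,
      mem_wallHyperplane_conj_gen.2 ⟨hcb.symm, conj_mul_eq_conj_iff_commute.2 hbc.symm⟩,
      mul_gen_mem_wallHyperplane x c,
      mem_wallHyperplane_conj_gen.2 ⟨rfl, conj_mul_eq_conj_iff_commute.2 hbc⟩,
      davisGraph_adj_mul_gen x b, ?_, davisGraph_adj_mul_gen x c, davisGraph_adj_mul_gen _ c⟩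
    rw [← hcb]
    exact davisGraph_adj_mul_gen _ b

theorem hypLinkCone_iff (x : RACG A Γ) (a : A) :
    HypLinkCone (davisGraph A Γ) (wallHyperplane Γ (x * racgGen Γ a * x⁻¹))
        (x, x * racgGen Γ a) ↔
      ∃ b, Γ.Adj a b ∧ ∀ c, Γ.Adj a c → c ≠ b → Γ.Adj b c := by
  constructor
  · rintro ⟨u, hu, huw, hadj, hcone⟩
    obtain ⟨b, rfl, hab⟩ := (hypAdjEdge_iff hu x a).1 hadj
    have hba : b ≠ a := fun h => huw (h ▸ rfl)
    refine ⟨b, (commute_gen_iff.1 hab).resolve_left hba.symm, fun c hac hcb => ?_⟩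
    have hcross := hcone _ (isHyperplane_wallHyperplane x c)
      (by rw [Ne, wallHyperplane_conj_gen_inj]; exact hac.ne.symm)
      ((hypAdjEdge_iff (isHyperplane_wallHyperplane x c) x a).2 ⟨c, rfl, commute_gen_of_adj hac⟩)
      (by rw [Ne, wallHyperplane_conj_gen_inj]; exact hcb)
    exact (commute_gen_iff.1 ((transverse_wallHyperplane_iff x b c).1 hcross)).resolve_left
      hcb.symm
  · rintro ⟨b, hab, hcone⟩
    refine ⟨_, isHyperplane_wallHyperplane x b,
      by rw [Ne, wallHyperplane_conj_gen_inj]; exact hab.ne.symm,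
      (hypAdjEdge_iff (isHyperplane_wallHyperplane x b) x a).2 ⟨b, rfl, commute_gen_of_adj hab⟩,
      fun u hu huw hadj hub => ?_⟩
    obtain ⟨c, rfl, hac⟩ := (hypAdjEdge_iff hu x a).1 hadj
    have hca : c ≠ a := fun h => huw (h ▸ rfl)
    have hcb : c ≠ b := fun h => hub (h ▸ rfl)
    exact (transverse_wallHyperplane_iff x b c).2 (commute_gen_of_adj
      (hcone c ((commute_gen_iff.1 hac).resolve_left hca.symm) hcb))

end Hyperplanes

theorem davis_hyperplane_extremal_iff_general {A : Type*} (Γ : SimpleGraph A) :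
    (∃ (w : Set (RACG A Γ × RACG A Γ)) (e : RACG A Γ × RACG A Γ),
      IsHyperplane (davisGraph A Γ) w ∧ e ∈ w ∧ HypLinkCone (davisGraph A Γ) w e) ↔
    ∃ a b : A, a ≠ b ∧ starSet Γ a ⊆ starSet Γ b := by
  constructor
  · rintro ⟨w, e, hw, hew, hcone⟩
    obtain ⟨x, a, rfl, rfl⟩ := exists_eq_wallHyperplane_of_mem hw hew
    obtain ⟨b, hab, hlink⟩ := (hypLinkCone_iff x a).1 hcone
    exact ⟨a, b, hab.ne, (starSet_subset_starSet_iff hab.ne).2 ⟨hab, hlink⟩⟩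
  · rintro ⟨a, b, hab, hst⟩
    exact ⟨_, _, isHyperplane_wallHyperplane 1 a, mul_gen_mem_wallHyperplane 1 a,
      (hypLinkCone_iff 1 a).2 ⟨b, (starSet_subset_starSet_iff hab).1 hst⟩⟩

/-- for `Γ` finite and not a cone (so that `W_Γ` has no finite direct
factors), the universal cover of the Davis complex has a hyperplane with an extremal
vertex iff there are distinct vertices `a, b` of `Γ` with `St(a) ⊆ St(b)`. -/
theorem davis_hyperplane_extremal_iff {A : Type*} [Fintype A] (Γ : SimpleGraph A)
    (hnc : ¬ GraphIsCone Γ) :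
    (∃ (w : Set (RACG A Γ × RACG A Γ)) (e : RACG A Γ × RACG A Γ),
      IsHyperplane (davisGraph A Γ) w ∧ e ∈ w ∧ HypLinkCone (davisGraph A Γ) w e) ↔
    ∃ a b : A, a ≠ b ∧ starSet Γ a ⊆ starSet Γ b :=
  davis_hyperplane_extremal_iff_general Γ
end
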